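/- Let (M,d,μ) be a metric measure space with a σ-finite doubling Borel measure and μ(M) = ∞, and let g ∈ L²_loc(μ). If A ≥ 0 is such that |∫_M a g dμ| ≤ A for every (1,2)-atom a on M, then for every ball B one has (μ(B)^{-1} ∫_B |g − g_B|² dμ)^{1/2} ≤ 2A; in particular g ∈ BMO(M) with ‖g‖_{BMO} ≤ 2A. -/

import Mathlib

open MeasureTheory Metric Filter ENNReal

noncomputable section

universe u

/-- A `(1,2)`-atom on a metric measure space `(M, d, μ)`: a function in `L²(μ)` supported
in a closed ball `B`, with `∫_M a dμ = 0` and `(μ(B)⁻¹ ∫_B |a|² dμ)^{1/2} ≤ μ(B)⁻¹`. -/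
def Is12Atom {M : Type u} [MetricSpace M] [MeasurableSpace M] (μ : Measure M)
    (a : M → ℝ) : Prop :=
  ∃ (x : M) (r : ℝ), 0 < r ∧
    MemLp a 2 μ ∧
    (∀ y, y ∉ closedBall x r → a y = 0) ∧
    (∫ y, a y ∂μ) = 0 ∧
    ((μ (closedBall x r))⁻¹ *
      ∫⁻ y in closedBall x r, (‖a y‖₊ : ℝ≥0∞) ^ (2 : ℝ) ∂μ) ^ ((1 : ℝ) / 2)
      ≤ (μ (closedBall x r))⁻¹

/-- The average `g_B = μ(B)⁻¹ ∫_B g dμ` of `g` on the closed ball `B = B̄(x,r)`. -/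
def ballAverage {M : Type u} [MetricSpace M] [MeasurableSpace M] (μ : Measure M)
    (g : M → ℝ) (x : M) (r : ℝ) : ℝ :=
  (μ (closedBall x r)).toReal⁻¹ * ∫ y in closedBall x r, g y ∂μ

/-! For a ball `B` with `0 < μ B < ∞`, put `h = g - g_B` and `N = (⨍_B h²)^{1/2}`. Since `h`
has mean zero on `B`, the function `1_B h / (μ(B) N)` is a `(1,2)`-atom, and for the same reason
its pairing with `g` equals its pairing with `h`, which is `N`. Hence `N ≤ A`, and Jensen's
inequality gives `⨍_B |h| ≤ N`. -/

section

variable {α : Type*} [MeasurableSpace α] {μ : Measure α}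

theorem toReal_inv_mul_setIntegral (s : Set α) (f : α → ℝ) :
    (μ s).toReal⁻¹ * ∫ y in s, f y ∂μ = ⨍ y in s, f y ∂μ := by
  rw [setAverage_eq, measureReal_def, smul_eq_mul]

theorem setAverage_nonneg {s : Set α} {f : α → ℝ} (hf : ∀ y, 0 ≤ f y) :
    0 ≤ ⨍ y in s, f y ∂μ := by
  rw [setAverage_eq]
  exact smul_nonneg (inv_nonneg.mpr measureReal_nonneg) (integral_nonneg hf)

theorem MeasureTheory.MemLp.sub_setAverage {s : Set α} {f : α → ℝ} {p : ℝ≥0∞}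
    (hf : MemLp f p (μ.restrict s)) :
    MemLp (fun y => f y - ⨍ z in s, f z ∂μ) p (μ.restrict s) := by
  by_cases hs : μ s = ∞
  · simpa [setAverage_eq, measureReal_def, hs] using hf
  · have : IsFiniteMeasure (μ.restrict s) := isFiniteMeasure_restrict.mpr hs
    exact hf.sub (memLp_const _)

theorem setIntegral_sub_setAverage_mul_self {s : Set α} {f : α → ℝ} (hs : μ s ≠ ∞)
    (hf : MemLp f 2 (μ.restrict s)) :
    ∫ y in s, (f y - ⨍ z in s, f z ∂μ) * f y ∂μ =
      ∫ y in s, (f y - ⨍ z in s, f z ∂μ) ^ 2 ∂μ := by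
  have : IsFiniteMeasure (μ.restrict s) := isFiniteMeasure_restrict.mpr hs
  set c := ⨍ z in s, f z ∂μ
  have hf' := hf.sub_setAverage
  have hsplit : (fun y => (f y - c) * f y) = fun y => (f y - c) ^ 2 + c * (f y - c) := by
    funext y; ring
  rw [hsplit, integral_add hf'.integrable_sq ((hf'.integrable one_le_two).const_mul c),
    integral_const_mul, setAverage_sub_setAverage hs f, mul_zero, add_zero]

theorem setAverage_abs_le_sqrt_setAverage_sq {s : Set α} {f : α → ℝ}
    (hf : MemLp f 2 (μ.restrict s)) :
    ⨍ y in s, |f y| ∂μ ≤ √(⨍ y in s, f y ^ 2 ∂μ) := by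
  by_cases hs : μ.real s = 0
  · simp [setAverage_eq, hs]
  have hs₀ : μ s ≠ 0 := fun h => hs (by simp [measureReal_def, h])
  have hs_top : μ s ≠ ∞ := fun h => hs (by simp [measureReal_def, h])
  have : IsFiniteMeasure (μ.restrict s) := isFiniteMeasure_restrict.mpr hs_top
  have hJensen := (convexOn_pow 2).map_set_average_le (continuousOn_pow 2) isClosed_Ici hs₀
    hs_top (.of_forall fun y => abs_nonneg (f y)) (hf.integrable one_le_two).abs
    (by simpa [IntegrableOn, Function.comp_def] using hf.integrable_sq)
  simp only [sq_abs] at hJensen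
  exact Real.le_sqrt_of_sq_le hJensen

end

section

variable {M : Type u} [MetricSpace M] [MeasurableSpace M] {μ : Measure M}

theorem is12Atom_zero (x : M) : Is12Atom μ 0 :=
  ⟨x, 1, one_pos, MemLp.zero, fun _ _ => rfl, integral_zero _ _, by
    simp [ENNReal.zero_rpow_of_pos]⟩

theorem ballAverage_eq_setAverage (g : M → ℝ) (x : M) (r : ℝ) :
    ballAverage μ g x r = ⨍ y in closedBall x r, g y ∂μ :=
  toReal_inv_mul_setIntegral _ _

theorem nonneg_of_forall_atom_pairing_le {g : M → ℝ} {A : ℝ} (x : M)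
    (hpair : ∀ a : M → ℝ, Is12Atom μ a → |∫ y, a y * g y ∂μ| ≤ A) :
    0 ≤ A := by
  simpa using hpair 0 (is12Atom_zero x)

variable [OpensMeasurableSpace M]

theorem is12Atom_indicator {h : M → ℝ} {x : M} {r : ℝ} (hr : 0 < r)
    (hh : MemLp h 2 (μ.restrict (closedBall x r)))
    (hmean : ∫ y in closedBall x r, h y ∂μ = 0)
    (hsize : √(⨍ y in closedBall x r, h y ^ 2 ∂μ) ≤ (μ (closedBall x r)).toReal⁻¹) :
    Is12Atom μ ((closedBall x r).indicator h) := by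
  set B := closedBall x r
  have hB : MeasurableSet B := measurableSet_closedBall
  refine ⟨x, r, hr, (memLp_indicator_iff_restrict hB).mpr hh,
    fun y hy => Set.indicator_of_notMem hy h, by rwa [integral_indicator hB], ?_⟩
  show ((μ B)⁻¹ * ∫⁻ y in B, (‖B.indicator h y‖₊ : ℝ≥0∞) ^ (2 : ℝ) ∂μ) ^ ((1 : ℝ) / 2)
    ≤ (μ B)⁻¹
  have hlint : ∫⁻ y in B, (‖B.indicator h y‖₊ : ℝ≥0∞) ^ (2 : ℝ) ∂μ
      = ENNReal.ofReal (∫ y in B, h y ^ 2 ∂μ) := by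
    rw [ofReal_integral_eq_lintegral_ofReal hh.integrable_sq (.of_forall fun y => sq_nonneg _)]
    refine setLIntegral_congr_fun hB fun y hy => ?_
    rw [Set.indicator_of_mem hy, ENNReal.rpow_two, ← enorm_eq_nnnorm, Real.enorm_eq_ofReal_abs,
      ← ENNReal.ofReal_pow (abs_nonneg _), sq_abs]
  rcases eq_or_ne (μ B) 0 with hB₀ | hB₀
  · simp [hB₀]
  rcases eq_or_ne (μ B) ∞ with hB_top | hB_top
  · simp [hB_top]
  have hμB : μ B = ENNReal.ofReal (μ.real B) := (ENNReal.ofReal_toReal hB_top).symm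
  have hV : 0 < μ.real B := ENNReal.toReal_pos hB₀ hB_top
  rw [hlint, ← measure_smul_setAverage _ hB_top, smul_eq_mul, hμB,
    ← ENNReal.ofReal_inv_of_pos hV, ← ENNReal.ofReal_mul (inv_nonneg.mpr hV.le),
    inv_mul_cancel_left₀ hV.ne',
    ENNReal.ofReal_rpow_of_nonneg (setAverage_nonneg fun y => sq_nonneg (h y)) one_half_pos.le,
    ← Real.sqrt_eq_rpow]
  exact ENNReal.ofReal_le_ofReal hsize

theorem sqrt_setAverage_sq_sub_le_of_atom_pairing {g : M → ℝ} {A : ℝ}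
    (hpair : ∀ a : M → ℝ, Is12Atom μ a → |∫ y, a y * g y ∂μ| ≤ A) {x : M} {r : ℝ}
    (hr : 0 < r) (hg : MemLp g 2 (μ.restrict (closedBall x r))) :
    √(⨍ y in closedBall x r, (g y - ⨍ z in closedBall x r, g z ∂μ) ^ 2 ∂μ) ≤ A := by
  set B := closedBall x r
  set h := fun y => g y - ⨍ z in B, g z ∂μ
  set N := √(⨍ y in B, h y ^ 2 ∂μ) with hN_def
  clear_value N
  rcases (hN_def ▸ Real.sqrt_nonneg _ : 0 ≤ N).eq_or_lt with hN | hN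
  · exact hN ▸ nonneg_of_forall_atom_pairing_le x hpair
  have hV : 0 < μ.real B := by
    refine measureReal_nonneg.lt_of_ne fun hV₀ => hN.ne' ?_
    simp [hN_def, setAverage_eq, ← hV₀]
  have hB_top : μ B ≠ ∞ := fun hB => by simp [measureReal_def, hB] at hV
  have hh : MemLp h 2 (μ.restrict B) := hg.sub_setAverage
  have hmean : ∫ y in B, h y ∂μ = 0 := setAverage_sub_setAverage hB_top g
  have hsq : ∫ y in B, h y ^ 2 ∂μ = μ.real B * N ^ 2 := by
    rw [hN_def, Real.sq_sqrt (setAverage_nonneg fun y => sq_nonneg (h y)), ← smul_eq_mul,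
      measure_smul_setAverage _ hB_top]
  set k := (μ.real B * N)⁻¹
  have hkN : k * N = (μ.real B)⁻¹ := by
    simp only [k]
    field_simp
  have hsize : ⨍ y in B, (k * h y) ^ 2 ∂μ = (k * N) ^ 2 := by
    simp_rw [mul_pow]
    rw [setAverage_eq, integral_const_mul, hsq, smul_eq_mul]
    field_simp
  have hatom : Is12Atom μ (B.indicator fun y => k * h y) :=
    is12Atom_indicator hr (hh.const_mul k) (by rw [integral_const_mul, hmean, mul_zero])
      (by rw [hsize, Real.sqrt_sq (by positivity), hkN]; rfl)
  have hvalue : ∫ y, B.indicator (fun y => k * h y) y * g y ∂μ = N := by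
    simp_rw [← Set.indicator_mul_left, mul_assoc]
    rw [integral_indicator measurableSet_closedBall, integral_const_mul,
      setIntegral_sub_setAverage_mul_self hB_top hg, hsq]
    simp only [k]
    field_simp
  simpa [hvalue, abs_of_pos hN] using hpair _ hatom

end

theorem bmo_bound_of_uniform_atom_pairing
    {M : Type u} [MetricSpace M] [MeasurableSpace M] [BorelSpace M]
    (μ : Measure M)
    (g : M → ℝ)
    (hloc : ∀ (x : M) (r : ℝ), 0 < r → MemLp g 2 (μ.restrict (closedBall x r)))
    (A : ℝ)
    (hpair : ∀ a : M → ℝ, Is12Atom μ a → |∫ y, a y * g y ∂μ| ≤ A) :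
    ∀ (x : M) (r : ℝ), 0 < r →
      Real.sqrt ((μ (closedBall x r)).toReal⁻¹ *
          ∫ y in closedBall x r, (g y - ballAverage μ g x r) ^ 2 ∂μ) ≤ 2 * A ∧
      (μ (closedBall x r)).toReal⁻¹ *
          ∫ y in closedBall x r, |g y - ballAverage μ g x r| ∂μ ≤ 2 * A := by
  intro x r hr
  rw [ballAverage_eq_setAverage, toReal_inv_mul_setIntegral, toReal_inv_mul_setIntegral]
  have hA := nonneg_of_forall_atom_pairing_le x hpair
  have hL2 := sqrt_setAverage_sq_sub_le_of_atom_pairing hpair hr (hloc x r hr)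
  have hL1 := setAverage_abs_le_sqrt_setAverage_sq (hloc x r hr).sub_setAverage
  exact ⟨by linarith, by linarith⟩
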